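/- Let q ≥ 3, let m ≥ 0 and let t ≥ 2 be an integer with 2t > m. Then every (q−2)-colored Motzkin word γ of length m admits at most one factorization γ = uβv in which u and v are (q−2)-colored Motzkin words and β is an elevated (q−2)-colored Motzkin word of length at least t; i.e., if γ = uβv = u'β'v' are two such factorizations then u = u', β = β' and v = v'. -/

import Mathlib

/-- Value of a letter: 1 ↦ +1, 0 ↦ -1, other letters ↦ 0. -/
def mval (a : ℕ) : ℤ := if a = 1 then 1 else if a = 0 then -1 else 0

/-- Value-sum of a word. -/
def vsum (w : List ℕ) : ℤ := (w.map mval).sum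

/-- A (q-2)-colored Motzkin word over the alphabet Z_q = {0,...,q-1}:
all letters < q, every prefix has nonnegative value-sum, total value-sum 0. -/
def IsMotzkinWord (q : ℕ) (w : List ℕ) : Prop :=
  (∀ a ∈ w, a < q) ∧ (∀ u, u <+: w → 0 ≤ vsum u) ∧ vsum w = 0

/-- The set 𝓜_{q-2}(n) of (q-2)-colored Motzkin words of length n. -/
def MotzkinSet (q n : ℕ) : Set (List ℕ) := {w | w.length = n ∧ IsMotzkinWord q w}

/-- M_{q-2}(n), the number of (q-2)-colored Motzkin words of length n. -/
noncomputable def Mnum (q n : ℕ) : ℕ := (MotzkinSet q n).ncard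

/-- The set Ê_{q-2}(n) of elevated (q-2)-colored Motzkin words of length n:
words 1α0 with α ∈ 𝓜_{q-2}(n-2). -/
def ElevatedSet (q n : ℕ) : Set (List ℕ) :=
  {w | w.length = n ∧ ∃ α ∈ MotzkinSet q (n - 2), w = 1 :: (α ++ [0])}

/-- The set A_q(n). -/
def SetA (q n : ℕ) : Set (List ℕ) :=
  {w | ∃ i ≤ n / 2, ∃ α ∈ MotzkinSet q i, ∃ β ∈ ElevatedSet q (n - i), w = α ++ β} \
    {w | ∃ α ∈ ElevatedSet q (n / 2), ∃ β ∈ ElevatedSet q (n / 2), w = α ++ β}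

/-- The set B_q(n). -/
def SetB (q n : ℕ) : Set (List ℕ) :=
  {w | ∃ i ≤ n / 2 - 1, ∃ α ∈ MotzkinSet q i, ∃ β ∈ ElevatedSet q (n - i - 1),
    w = 1 :: (α ++ β)}

/-- The set C_q(n): words γ0 with γ a (q-2)-colored Motzkin word of length n-1
having no factor which is an elevated Motzkin word of length j ≥ ⌈n/2⌉. -/
def SetC (q n : ℕ) : Set (List ℕ) :=
  {w | ∃ γ ∈ MotzkinSet q (n - 1),
    (∀ j, (n + 1) / 2 ≤ j → ∀ β ∈ ElevatedSet q j, ¬ β <:+: γ) ∧ w = γ ++ [0]}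

/-- The cross-bifix-free candidate set CBFS_q(n). -/
def CBFS (q n : ℕ) : Set (List ℕ) := SetA q n ∪ SetB q n ∪ SetC q n

/-- A word is bifix-free if no nonempty proper prefix of it is also a suffix of it. -/
def BifixFree (w : List ℕ) : Prop :=
  ∀ u, u <+: w → u ≠ [] → u.length < w.length → ¬ u <:+ w

/-- BF_q(n): the set of bifix-free words of length n over Z_q. -/
def BF (q n : ℕ) : Set (List ℕ) := {w | w.length = n ∧ (∀ a ∈ w, a < q) ∧ BifixFree w}

/-- F_{k,q}(n): the number of words of length n over Z_q avoiding k consecutive 0's. -/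
noncomputable def Fcount (k q n : ℕ) : ℕ :=
  {w : List ℕ | w.length = n ∧ (∀ a ∈ w, a < q) ∧ ¬ List.replicate k 0 <:+: w}.ncard

/-- The set S_{k,q}(n) of Bajic--Stojanovic--Chee--Kiah type words: words s of length n
over Z_q with s₁ = ⋯ = s_k = 0, s_{k+1} ≠ 0, s_n ≠ 0, and such that the subword
s_{k+2} ⋯ s_{n-1} contains no k consecutive 0's. -/
def SetS (q k n : ℕ) : Set (List ℕ) :=
  {s | s.length = n ∧ (∀ a ∈ s, a < q) ∧ s.take k = List.replicate k 0 ∧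
    s.getD k 0 ≠ 0 ∧ s.getLast? ≠ some 0 ∧
    ¬ List.replicate k 0 <:+: (s.drop (k + 1)).take (n - k - 2)}

/-!
An elevated word `1α0` is a primitive Motzkin word: its value-sum is `0` while every nonempty
proper prefix has positive value-sum. Since `2t > m`, two elevated factors of length `≥ t` of
`γ` overlap. If they started at different positions, the later start would cut the earlier
factor at a nonempty proper prefix; that prefix has value-sum `0` because `u` and `u'` do, which
is impossible. So `u = u'`, and then two primitive words that are prefixes of the same word
coincide.
-/

lemma vsum_append (a b : List ℕ) : vsum (a ++ b) = vsum a + vsum b := by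
  simp [vsum]

lemma vsum_cons (a : ℕ) (w : List ℕ) : vsum (a :: w) = mval a + vsum w := by
  simp [vsum]

section ElevatedSet

variable {q n : ℕ} {β : List ℕ}

lemma ne_nil_of_mem_elevatedSet (hβ : β ∈ ElevatedSet q n) : β ≠ [] := by
  obtain ⟨-, α, -, rfl⟩ := hβ
  exact List.cons_ne_nil _ _

lemma vsum_eq_zero_of_mem_elevatedSet (hβ : β ∈ ElevatedSet q n) : vsum β = 0 := by
  obtain ⟨-, α, ⟨-, -, -, hα⟩, rfl⟩ := hβ
  rw [vsum_cons, vsum_append, hα]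
  simp [vsum, mval]

lemma vsum_pos_of_prefix_of_mem_elevatedSet {p : List ℕ} (hβ : β ∈ ElevatedSet q n)
    (hp : p <+: β) (hne : p ≠ []) (hlt : p.length < β.length) : 0 < vsum p := by
  obtain ⟨-, α, ⟨-, -, hα, -⟩, rfl⟩ := hβ
  obtain ⟨a, r, rfl⟩ := List.exists_cons_of_ne_nil hne
  obtain ⟨rfl, hr⟩ := List.cons_prefix_cons.mp hp
  have hrα : r <+: α :=
    List.prefix_of_prefix_length_le hr (List.prefix_append α [0]) (by simpa using hlt)
  have := hα r hrα
  rw [vsum_cons, mval, if_pos rfl]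
  omega

lemma vsum_pos_of_append_eq_append_of_mem_elevatedSet {w s y : List ℕ}
    (hβ : β ∈ ElevatedSet q n) (h : w ++ s = β ++ y) (hne : w ≠ [])
    (hlt : w.length < β.length) : 0 < vsum w := by
  have hwβ : w <+: β :=
    List.prefix_of_prefix_length_le (h ▸ List.prefix_append w s) (List.prefix_append β y) hlt.le
  exact vsum_pos_of_prefix_of_mem_elevatedSet hβ hwβ hne hlt

lemma append_inj_of_mem_elevatedSet {n' : ℕ} {β' y y' : List ℕ} (hβ : β ∈ ElevatedSet q n)
    (hβ' : β' ∈ ElevatedSet q n') (h : β ++ y = β' ++ y') : β = β' ∧ y = y' := by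
  refine List.append_inj h (le_antisymm ?_ ?_) <;> refine not_lt.mp fun hlt => ?_
  · have := vsum_pos_of_append_eq_append_of_mem_elevatedSet hβ h.symm
      (ne_nil_of_mem_elevatedSet hβ') hlt
    rw [vsum_eq_zero_of_mem_elevatedSet hβ'] at this
    exact this.false
  · have := vsum_pos_of_append_eq_append_of_mem_elevatedSet hβ' h
      (ne_nil_of_mem_elevatedSet hβ) hlt
    rw [vsum_eq_zero_of_mem_elevatedSet hβ] at this
    exact this.false

lemma length_le_of_append_eq_append_of_mem_elevatedSet {x x' y z : List ℕ}
    (hx : vsum x = 0) (hx' : vsum x' = 0) (hβ : β ∈ ElevatedSet q n)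
    (h : x ++ (β ++ y) = x' ++ z) (hlt : x'.length < x.length + β.length) :
    x'.length ≤ x.length := by
  refine not_lt.mp fun hgt => ?_
  obtain ⟨w, rfl⟩ : x <+: x' :=
    List.prefix_of_prefix_length_le (List.prefix_append x _) (h ▸ List.prefix_append x' z) hgt.le
  rw [List.append_assoc] at h
  have hw := vsum_pos_of_append_eq_append_of_mem_elevatedSet hβ (List.append_cancel_left h).symm
    (by rintro rfl; simp at hgt) (by simp only [List.length_append] at hlt; omega)
  rw [vsum_append, hx] at hx'
  omega

end ElevatedSet

theorem unique_long_elevated_factor_general (q : ℕ) (m t : ℕ)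
    (htm : m < 2 * t) (γ : List ℕ) (hγ : γ ∈ MotzkinSet q m)
    (u β v u' β' v' : List ℕ)
    (hu : IsMotzkinWord q u)
    (hu' : IsMotzkinWord q u')
    (hβ : β ∈ ElevatedSet q β.length) (hβt : t ≤ β.length)
    (hβ' : β' ∈ ElevatedSet q β'.length) (hβ't : t ≤ β'.length)
    (h1 : γ = u ++ β ++ v) (h2 : γ = u' ++ β' ++ v') :
    u = u' ∧ β = β' ∧ v = v' := by
  have h : u ++ (β ++ v) = u' ++ (β' ++ v') := by
    simpa only [List.append_assoc] using h1.symm.trans h2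
  have hm₁ : u.length + (β.length + v.length) = m := by simpa [h1] using hγ.1
  have hm₂ : u'.length + (β'.length + v'.length) = m := by simpa [h2] using hγ.1
  have hlen : u.length = u'.length := le_antisymm
    (length_le_of_append_eq_append_of_mem_elevatedSet hu'.2.2 hu.2.2 hβ' h.symm (by omega))
    (length_le_of_append_eq_append_of_mem_elevatedSet hu.2.2 hu'.2.2 hβ h (by omega))
  obtain ⟨rfl, hβv⟩ := List.append_inj h hlen
  obtain ⟨rfl, rfl⟩ := append_inj_of_mem_elevatedSet hβ hβ' hβv
  exact ⟨rfl, rfl, rfl⟩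

/-- A (q-2)-colored Motzkin word γ of length m < 2t admits at most one
factorization γ = uβv with u, v (q-2)-colored Motzkin words and β an elevated
(q-2)-colored Motzkin word of length ≥ t (t ≥ 2). -/
theorem unique_long_elevated_factor (q : ℕ) (hq : 3 ≤ q) (m t : ℕ) (ht : 2 ≤ t)
    (htm : m < 2 * t) (γ : List ℕ) (hγ : γ ∈ MotzkinSet q m)
    (u β v u' β' v' : List ℕ)
    (hu : IsMotzkinWord q u) (hv : IsMotzkinWord q v)
    (hu' : IsMotzkinWord q u') (hv' : IsMotzkinWord q v')
    (hβ : β ∈ ElevatedSet q β.length) (hβt : t ≤ β.length)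
    (hβ' : β' ∈ ElevatedSet q β'.length) (hβ't : t ≤ β'.length)
    (h1 : γ = u ++ β ++ v) (h2 : γ = u' ++ β' ++ v') :
    u = u' ∧ β = β' ∧ v = v' :=
  unique_long_elevated_factor_general q m t htm γ hγ u β v u' β' v' hu hu' hβ hβt hβ' hβ't h1 h2
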